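/- With the deterministic setup below, if m_i := inf_{t∈[0,1]} σ_min( J_{/i}( t β̂ + (1−t) β̂_{/i} ) ) > 0, then ‖β̂_{/i} − β̂‖₂² ≤ ( ℓ̇(y_i ∣ x_iᵀβ̂) / m_i )² · ‖x_i‖₂²; and if m_{ij} := inf_{t∈[0,1]} σ_min( J_{/ij}( t β̂_{/i} + (1−t) β̂_{/ij} ) ) > 0, then ‖β̂_{/i} − β̂_{/ij}‖₂² ≤ ( ℓ̇(y_j ∣ x_jᵀβ̂_{/i}) / m_{ij} )² · ‖x_j‖₂². -/

import Mathlib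

/-!
Write `g_s` for the gradient of the objective keeping the rows in `s`, and `u = β₁ - β₂`.
Along the segment from `β₂` to `β₁`, the derivative of `t ↦ uᵀ g_s(γ t)` is the quadratic form
`uᵀ J_s(γ t) u ≥ m ‖u‖²`, so the mean value theorem gives `m ‖u‖² ≤ uᵀ (g_s(β₁) - g_s(β₂))`.
If `β₂` is stationary for `s` and `β₁` for `s ∪ {i}`, the right-hand side is
`-ℓ̇(y_i ∣ x_iᵀβ₁) x_iᵀu`, and Cauchy–Schwarz yields `m ‖u‖ ≤ |ℓ̇(y_i ∣ x_iᵀβ₁)| ‖x_i‖`.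
Both claims are this one-row step, for `s = [n] ∖ {i}` and for `s = [n] ∖ {i, j}` with row `j`.
-/

open Matrix

noncomputable section

/-- Euclidean dot product on `Fin p → ℝ`. -/
def dotp {p : ℕ} (v w : Fin p → ℝ) : ℝ := ∑ k, v k * w k

/-- Smallest eigenvalue of a symmetric matrix, expressed as the infimum of the Rayleigh
quotient over the unit sphere. -/
def minEig {p : ℕ} (A : Matrix (Fin p) (Fin p) ℝ) : ℝ :=
  ⨅ v : {v : Fin p → ℝ // ∑ k, v k ^ 2 = 1}, dotp v.1 (A.mulVec v.1)

/-- The Jacobian `J_{/i}(θ) = λ ∇²r(θ) + X_{/i}ᵀ diag(ℓ̈(y_k∣x_kᵀθ))_{k≠i} X_{/i}` of the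
leave-`i`-out optimality system (here for an arbitrary index set `s` of retained rows). -/
def jacb {n p : ℕ} (x : Fin n → (Fin p → ℝ)) (y : Fin n → ℝ) (ddl : ℝ → ℝ → ℝ)
    (lam : ℝ) (hessr : (Fin p → ℝ) → Matrix (Fin p) (Fin p) ℝ)
    (s : Finset (Fin n)) (θ : Fin p → ℝ) : Matrix (Fin p) (Fin p) ℝ :=
  lam • hessr θ + ∑ k ∈ s, ddl (y k) (dotp (x k) θ) • vecMulVec (x k) (x k)

theorem dotp_eq_dotProduct {p : ℕ} (v w : Fin p → ℝ) : dotp v w = v ⬝ᵥ w := rfl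

theorem sum_sq_eq_dotProduct_self {p : ℕ} (v : Fin p → ℝ) : ∑ k, v k ^ 2 = v ⬝ᵥ v := by
  simp only [dotProduct, sq]

theorem dotProduct_self_nonneg {p : ℕ} (v : Fin p → ℝ) : 0 ≤ v ⬝ᵥ v := by
  simpa using dotProduct_star_self_nonneg v

theorem bddBelow_range_of_iInf_pos {ι : Sort*} {f : ι → ℝ} (h : 0 < ⨅ i, f i) :
    BddBelow (Set.range f) := by
  by_contra hf
  rw [Real.iInf_of_not_bddBelow hf] at h
  exact h.false

theorem HasDerivAt.const_dotProduct {p : ℕ} {f : ℝ → Fin p → ℝ} {f' : Fin p → ℝ} {t : ℝ}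
    (hf : HasDerivAt f f' t) (v : Fin p → ℝ) :
    HasDerivAt (fun t => v ⬝ᵥ f t) (v ⬝ᵥ f') t :=
  HasDerivAt.fun_sum fun k _ => (hasDerivAt_pi.1 hf k).const_mul (v k)

theorem minEig_mul_le {p : ℕ} {A : Matrix (Fin p) (Fin p) ℝ} (hA : 0 < minEig A)
    (u : Fin p → ℝ) : minEig A * (u ⬝ᵥ u) ≤ u ⬝ᵥ (A *ᵥ u) := by
  rcases eq_or_ne u 0 with rfl | hu
  · simp
  set c := √(u ⬝ᵥ u)
  have hc : 0 < c := Real.sqrt_pos.2 (by simpa using dotProduct_star_self_pos_iff.2 hu)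
  have hc_sq : c ^ 2 = u ⬝ᵥ u := Real.sq_sqrt (dotProduct_self_nonneg u)
  have hv : ∑ k, (c⁻¹ • u) k ^ 2 = 1 := by
    rw [sum_sq_eq_dotProduct_self, dotProduct_smul, smul_dotProduct, ← hc_sq, smul_eq_mul,
      smul_eq_mul]
    field_simp
  have hle : minEig A ≤ (c⁻¹ • u) ⬝ᵥ (A *ᵥ (c⁻¹ • u)) :=
    ciInf_le (bddBelow_range_of_iInf_pos hA) ⟨c⁻¹ • u, hv⟩
  calc minEig A * (u ⬝ᵥ u) = c ^ 2 * minEig A := by rw [hc_sq, mul_comm]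
    _ ≤ c ^ 2 * ((c⁻¹ • u) ⬝ᵥ (A *ᵥ (c⁻¹ • u))) := by gcongr
    _ = u ⬝ᵥ (A *ᵥ u) := by
      rw [mulVec_smul, dotProduct_smul, smul_dotProduct, smul_eq_mul, smul_eq_mul]
      field_simp

theorem sum_sq_le_of_mul_le_dotProduct {p : ℕ} {M c : ℝ} {u v : Fin p → ℝ} (hM : 0 < M)
    (h : M * (u ⬝ᵥ u) ≤ c * (v ⬝ᵥ u)) : ∑ k, u k ^ 2 ≤ (c / M) ^ 2 * ∑ k, v k ^ 2 := by
  have hcs : (v ⬝ᵥ u) ^ 2 ≤ (∑ k, v k ^ 2) * ∑ k, u k ^ 2 :=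
    Finset.sum_mul_sq_le_sq_mul_sq _ v u
  simp only [sum_sq_eq_dotProduct_self] at hcs ⊢
  rw [div_pow, div_mul_eq_mul_div, le_div_iff₀ (by positivity)]
  rcases (dotProduct_self_nonneg u).eq_or_lt with hQ | hQ
  · rw [← hQ, zero_mul]
    exact mul_nonneg (sq_nonneg c) (dotProduct_self_nonneg v)
  have hsq : (M * (u ⬝ᵥ u)) ^ 2 ≤ c ^ 2 * ((v ⬝ᵥ v) * (u ⬝ᵥ u)) :=
    calc (M * (u ⬝ᵥ u)) ^ 2 ≤ (c * (v ⬝ᵥ u)) ^ 2 := by gcongr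
      _ = c ^ 2 * (v ⬝ᵥ u) ^ 2 := by ring
      _ ≤ c ^ 2 * ((v ⬝ᵥ v) * (u ⬝ᵥ u)) := by gcongr
  nlinarith

section

variable {n p : ℕ} (x : Fin n → Fin p → ℝ) (y : Fin n → ℝ) (dℓ ddℓ : ℝ → ℝ → ℝ) (lam : ℝ)
  (gradr : (Fin p → ℝ) → Fin p → ℝ) (hessr : (Fin p → ℝ) → Matrix (Fin p) (Fin p) ℝ)

/-- The gradient of `β ↦ ∑_{k ∈ s} ℓ(y_k ∣ x_kᵀβ) + λ r(β)`, given `dℓ = ℓ̇` and `gradr = ∇r`. -/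
def objectiveGrad (s : Finset (Fin n)) (β : Fin p → ℝ) : Fin p → ℝ :=
  lam • gradr β + ∑ k ∈ s, dℓ (y k) (x k ⬝ᵥ β) • x k

/-- The paper's `m_i` and `m_{ij}`. -/
def segmentMinEig (s : Finset (Fin n)) (β₁ β₂ : Fin p → ℝ) : ℝ :=
  ⨅ t : Set.Icc (0:ℝ) 1, minEig (jacb x y ddℓ lam hessr s (t.1 • β₁ + (1 - t.1) • β₂))

variable {x y dℓ ddℓ lam gradr hessr}

theorem objectiveGrad_insert {s : Finset (Fin n)} {i : Fin n} (hi : i ∉ s) (β : Fin p → ℝ) :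
    objectiveGrad x y dℓ lam gradr (insert i s) β
      = objectiveGrad x y dℓ lam gradr s β + dℓ (y i) (x i ⬝ᵥ β) • x i := by
  rw [objectiveGrad, objectiveGrad, Finset.sum_insert hi]
  abel

theorem jacb_mulVec (s : Finset (Fin n)) (θ u : Fin p → ℝ) :
    jacb x y ddℓ lam hessr s θ *ᵥ u
      = lam • (hessr θ *ᵥ u) + ∑ k ∈ s, (ddℓ (y k) (x k ⬝ᵥ θ) * (x k ⬝ᵥ u)) • x k := by
  simp only [jacb, add_mulVec, smul_mulVec, sum_mulVec, vecMulVec_mulVec, op_smul_eq_smul,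
    smul_smul, dotp_eq_dotProduct]

theorem hasDerivAt_objective_comp {ℓ : ℝ → ℝ → ℝ} {r : (Fin p → ℝ) → ℝ}
    (hdℓ : ∀ a z, HasDerivAt (ℓ a) (dℓ a z) z)
    (hgradr : ∀ β, HasFDerivAt r
      (∑ k, gradr β k • (ContinuousLinearMap.proj k : ((Fin p → ℝ) →L[ℝ] ℝ))) β)
    (s : Finset (Fin n)) {γ : ℝ → Fin p → ℝ} {γ' : Fin p → ℝ} {t : ℝ}
    (hγ : HasDerivAt γ γ' t) :
    HasDerivAt (fun t => (∑ k ∈ s, ℓ (y k) (dotp (x k) (γ t))) + lam * r (γ t))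
      (objectiveGrad x y dℓ lam gradr s (γ t) ⬝ᵥ γ') t := by
  have hloss : ∀ k ∈ s, HasDerivAt (fun t => ℓ (y k) (dotp (x k) (γ t)))
      (dℓ (y k) (x k ⬝ᵥ γ t) * (x k ⬝ᵥ γ')) t :=
    fun k _ => (hdℓ _ _).comp t (hγ.const_dotProduct (x k))
  have hr : HasDerivAt (fun t => r (γ t)) (gradr (γ t) ⬝ᵥ γ') t := by
    simpa [Function.comp_def, dotProduct] using (hgradr (γ t)).comp_hasDerivAt t hγ
  have hgrad : objectiveGrad x y dℓ lam gradr s (γ t) ⬝ᵥ γ'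
      = (∑ k ∈ s, dℓ (y k) (x k ⬝ᵥ γ t) * (x k ⬝ᵥ γ')) + lam * (gradr (γ t) ⬝ᵥ γ') := by
    simp only [objectiveGrad, add_dotProduct, smul_dotProduct, sum_dotProduct, smul_eq_mul]
    ring
  rw [hgrad]
  exact (HasDerivAt.fun_sum hloss).fun_add (hr.const_mul lam)

theorem objectiveGrad_eq_zero_of_hasFDerivAt {ℓ : ℝ → ℝ → ℝ} {r : (Fin p → ℝ) → ℝ}
    (hdℓ : ∀ a z, HasDerivAt (ℓ a) (dℓ a z) z)
    (hgradr : ∀ β, HasFDerivAt r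
      (∑ k, gradr β k • (ContinuousLinearMap.proj k : ((Fin p → ℝ) →L[ℝ] ℝ))) β)
    {s : Finset (Fin n)} {β : Fin p → ℝ}
    (hstat : HasFDerivAt (fun β => (∑ k ∈ s, ℓ (y k) (dotp (x k) β)) + lam * r β)
      (0 : (Fin p → ℝ) →L[ℝ] ℝ) β) :
    objectiveGrad x y dℓ lam gradr s β = 0 := by
  refine dotProduct_eq_zero _ fun e => ?_
  have hline : HasDerivAt (fun t : ℝ => β + t • e) e 0 := by
    simpa using ((hasDerivAt_id (0 : ℝ)).smul_const e).const_add β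
  have h := hasDerivAt_objective_comp (x := x) (y := y) (lam := lam) hdℓ hgradr s hline
  simp only [zero_smul, add_zero] at h
  simpa using h.unique (hstat.comp_hasDerivAt_of_eq 0 hline (by simp))

theorem hasDerivAt_objectiveGrad_comp
    (hddℓ : ∀ a z, HasDerivAt (dℓ a) (ddℓ a z) z)
    (hhessr : ∀ β, HasFDerivAt gradr
      (LinearMap.toContinuousLinearMap (Matrix.toLin' (hessr β))) β)
    (s : Finset (Fin n)) {γ : ℝ → Fin p → ℝ} {γ' : Fin p → ℝ} {t : ℝ}
    (hγ : HasDerivAt γ γ' t) :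
    HasDerivAt (fun t => objectiveGrad x y dℓ lam gradr s (γ t))
      (jacb x y ddℓ lam hessr s (γ t) *ᵥ γ') t := by
  have hr : HasDerivAt (fun t => gradr (γ t)) (hessr (γ t) *ᵥ γ') t := by
    simpa [Function.comp_def] using (hhessr (γ t)).comp_hasDerivAt t hγ
  have hloss : ∀ k ∈ s, HasDerivAt (fun t => dℓ (y k) (x k ⬝ᵥ γ t) • x k)
      ((ddℓ (y k) (x k ⬝ᵥ γ t) * (x k ⬝ᵥ γ')) • x k) t :=
    fun k _ => ((hddℓ _ _).comp t (hγ.const_dotProduct (x k))).smul_const (x k)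
  rw [jacb_mulVec]
  exact (hr.const_smul lam).add (HasDerivAt.fun_sum hloss)

theorem segmentMinEig_mul_le_dotProduct_objectiveGrad_sub
    (hddℓ : ∀ a z, HasDerivAt (dℓ a) (ddℓ a z) z)
    (hhessr : ∀ β, HasFDerivAt gradr
      (LinearMap.toContinuousLinearMap (Matrix.toLin' (hessr β))) β)
    {s : Finset (Fin n)} {β₁ β₂ : Fin p → ℝ}
    (hM : 0 < segmentMinEig x y ddℓ lam hessr s β₁ β₂) :
    segmentMinEig x y ddℓ lam hessr s β₁ β₂ * ((β₁ - β₂) ⬝ᵥ (β₁ - β₂))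
      ≤ (β₁ - β₂) ⬝ᵥ
          (objectiveGrad x y dℓ lam gradr s β₁ - objectiveGrad x y dℓ lam gradr s β₂) := by
  set u := β₁ - β₂
  set γ : ℝ →ᵃ[ℝ] Fin p → ℝ := AffineMap.lineMap β₂ β₁
  have hγ : ∀ t, γ t = t • β₁ + (1 - t) • β₂ := fun t => by
    rw [AffineMap.lineMap_apply_module, add_comm]
  have hφ : ∀ t, HasDerivAt (fun t => u ⬝ᵥ objectiveGrad x y dℓ lam gradr s (γ t))
      (u ⬝ᵥ (jacb x y ddℓ lam hessr s (γ t) *ᵥ u)) t := fun t =>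
    (hasDerivAt_objectiveGrad_comp hddℓ hhessr s AffineMap.hasDerivAt_lineMap).const_dotProduct u
  obtain ⟨c, hc, hslope⟩ := exists_hasDerivAt_eq_slope _ _ zero_lt_one
    (fun t _ => (hφ t).continuousAt.continuousWithinAt) fun t _ => hφ t
  have hMc : segmentMinEig x y ddℓ lam hessr s β₁ β₂
      ≤ minEig (jacb x y ddℓ lam hessr s (γ c)) := by
    rw [hγ]
    exact ciInf_le (bddBelow_range_of_iInf_pos hM) ⟨c, Set.Ioo_subset_Icc_self hc⟩
  calc segmentMinEig x y ddℓ lam hessr s β₁ β₂ * (u ⬝ᵥ u)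
      ≤ minEig (jacb x y ddℓ lam hessr s (γ c)) * (u ⬝ᵥ u) := by
        gcongr
        exact dotProduct_self_nonneg u
    _ ≤ u ⬝ᵥ (jacb x y ddℓ lam hessr s (γ c) *ᵥ u) := minEig_mul_le (hM.trans_le hMc) u
    _ = _ := by
      rw [hslope]
      simp [γ, dotProduct_sub]

theorem sum_sq_sub_le_of_objectiveGrad_insert
    (hddℓ : ∀ a z, HasDerivAt (dℓ a) (ddℓ a z) z)
    (hhessr : ∀ β, HasFDerivAt gradr
      (LinearMap.toContinuousLinearMap (Matrix.toLin' (hessr β))) β)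
    {s : Finset (Fin n)} {i : Fin n} (hi : i ∉ s) {β₁ β₂ : Fin p → ℝ}
    (h₁ : objectiveGrad x y dℓ lam gradr (insert i s) β₁ = 0)
    (h₂ : objectiveGrad x y dℓ lam gradr s β₂ = 0)
    (hM : 0 < segmentMinEig x y ddℓ lam hessr s β₁ β₂) :
    ∑ k, (β₁ k - β₂ k) ^ 2
      ≤ (dℓ (y i) (x i ⬝ᵥ β₁) / segmentMinEig x y ddℓ lam hessr s β₁ β₂) ^ 2 * ∑ k, x i k ^ 2 := by
  have hs₁ : objectiveGrad x y dℓ lam gradr s β₁ = -dℓ (y i) (x i ⬝ᵥ β₁) • x i := by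
    rw [objectiveGrad_insert hi] at h₁
    rw [neg_smul, eq_neg_iff_add_eq_zero, h₁]
  have hmono := segmentMinEig_mul_le_dotProduct_objectiveGrad_sub hddℓ hhessr hM
  rw [hs₁, h₂, sub_zero, dotProduct_smul, dotProduct_comm _ (x i), smul_eq_mul] at hmono
  have hbound := sum_sq_le_of_mul_le_dotProduct hM hmono
  rwa [neg_div, neg_sq] at hbound

end

theorem leave_one_out_perturbation_bound_general {n p : ℕ}
    (y : Fin n → ℝ) (x : Fin n → (Fin p → ℝ))
    (ℓ dℓ ddℓ : ℝ → ℝ → ℝ)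
    (hdℓ : ∀ a z, HasDerivAt (ℓ a) (dℓ a z) z)
    (hddℓ : ∀ a z, HasDerivAt (dℓ a) (ddℓ a z) z)
    (r : (Fin p → ℝ) → ℝ) (gradr : (Fin p → ℝ) → (Fin p → ℝ))
    (hessr : (Fin p → ℝ) → Matrix (Fin p) (Fin p) ℝ)
    (hgradr : ∀ β, HasFDerivAt r
      (∑ k, gradr β k • (ContinuousLinearMap.proj k : ((Fin p → ℝ) →L[ℝ] ℝ))) β)
    (hhessr : ∀ β, HasFDerivAt gradr
      (LinearMap.toContinuousLinearMap (Matrix.toLin' (hessr β))) β)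
    (lam : ℝ)
    (i j : Fin n) (hij : i ≠ j)
    (βhat βloo βloo2 : Fin p → ℝ)
    (hstat : HasFDerivAt
      (fun β => (∑ k : Fin n, ℓ (y k) (dotp (x k) β)) + lam * r β)
      (0 : (Fin p → ℝ) →L[ℝ] ℝ) βhat)
    (hstat_i : HasFDerivAt
      (fun β => (∑ k ∈ Finset.univ.erase i, ℓ (y k) (dotp (x k) β)) + lam * r β)
      (0 : (Fin p → ℝ) →L[ℝ] ℝ) βloo)
    (hstat_ij : HasFDerivAt
      (fun β => (∑ k ∈ (Finset.univ.erase i).erase j, ℓ (y k) (dotp (x k) β)) + lam * r β)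
      (0 : (Fin p → ℝ) →L[ℝ] ℝ) βloo2) :
    (0 < (⨅ t : Set.Icc (0:ℝ) 1,
        minEig (jacb x y ddℓ lam hessr (Finset.univ.erase i)
          (t.1 • βhat + (1 - t.1) • βloo))) →
      (∑ k, (βloo k - βhat k) ^ 2)
        ≤ (dℓ (y i) (dotp (x i) βhat)
            / (⨅ t : Set.Icc (0:ℝ) 1,
                minEig (jacb x y ddℓ lam hessr (Finset.univ.erase i)
                  (t.1 • βhat + (1 - t.1) • βloo)))) ^ 2 * ∑ k, (x i k) ^ 2)
    ∧
    (0 < (⨅ t : Set.Icc (0:ℝ) 1,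
        minEig (jacb x y ddℓ lam hessr ((Finset.univ.erase i).erase j)
          (t.1 • βloo + (1 - t.1) • βloo2))) →
      (∑ k, (βloo k - βloo2 k) ^ 2)
        ≤ (dℓ (y j) (dotp (x j) βloo)
            / (⨅ t : Set.Icc (0:ℝ) 1,
                minEig (jacb x y ddℓ lam hessr ((Finset.univ.erase i).erase j)
                  (t.1 • βloo + (1 - t.1) • βloo2)))) ^ 2 * ∑ k, (x j k) ^ 2) := by
  have hhat := objectiveGrad_eq_zero_of_hasFDerivAt hdℓ hgradr hstat
  have hloo := objectiveGrad_eq_zero_of_hasFDerivAt hdℓ hgradr hstat_i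
  have hloo2 := objectiveGrad_eq_zero_of_hasFDerivAt hdℓ hgradr hstat_ij
  have hj : j ∈ Finset.univ.erase i := Finset.mem_erase.2 ⟨hij.symm, Finset.mem_univ j⟩
  refine ⟨fun hM => ?_, fun hM => ?_⟩
  · simp_rw [sub_sq_comm (βloo _)]
    rw [← Finset.insert_erase (Finset.mem_univ i)] at hhat
    exact sum_sq_sub_le_of_objectiveGrad_insert hddℓ hhessr (Finset.notMem_erase i _) hhat hloo hM
  · rw [← Finset.insert_erase hj] at hloo
    exact sum_sq_sub_le_of_objectiveGrad_insert hddℓ hhessr (Finset.notMem_erase j _) hloo hloo2 hM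

/-- Lemma `perturb_i`: with fixed data, twice continuously differentiable loss
and regularizer, and stationary points `βhat`, `βloo` (leave-`i`-out), `βloo2`
(leave-`{i,j}`-out) of the full, leave-one-out and leave-two-out objectives, if the infimum
`m_i` (resp. `m_{ij}`) over `t ∈ [0,1]` of the minimal eigenvalue of the Jacobian along the
segment joining the two estimates is positive, then
`‖βloo − βhat‖₂² ≤ (ℓ̇(y_i∣x_iᵀβhat)/m_i)² ‖x_i‖₂²` and
`‖βloo − βloo2‖₂² ≤ (ℓ̇(y_j∣x_jᵀβloo)/m_{ij})² ‖x_j‖₂²`. -/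
theorem leave_one_out_perturbation_bound {n p : ℕ}
    (y : Fin n → ℝ) (x : Fin n → (Fin p → ℝ))
    (ℓ dℓ ddℓ : ℝ → ℝ → ℝ)
    (hdℓ : ∀ a z, HasDerivAt (ℓ a) (dℓ a z) z)
    (hddℓ : ∀ a z, HasDerivAt (dℓ a) (ddℓ a z) z)
    (hcontℓ : ∀ a, Continuous (ddℓ a))
    (r : (Fin p → ℝ) → ℝ) (gradr : (Fin p → ℝ) → (Fin p → ℝ))
    (hessr : (Fin p → ℝ) → Matrix (Fin p) (Fin p) ℝ)
    (hgradr : ∀ β, HasFDerivAt r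
      (∑ k, gradr β k • (ContinuousLinearMap.proj k : ((Fin p → ℝ) →L[ℝ] ℝ))) β)
    (hhessr : ∀ β, HasFDerivAt gradr
      (LinearMap.toContinuousLinearMap (Matrix.toLin' (hessr β))) β)
    (hcontr : Continuous hessr)
    (lam : ℝ) (hlam : 0 < lam)
    (i j : Fin n) (hij : i ≠ j)
    (βhat βloo βloo2 : Fin p → ℝ)
    (hstat : HasFDerivAt
      (fun β => (∑ k : Fin n, ℓ (y k) (dotp (x k) β)) + lam * r β)
      (0 : (Fin p → ℝ) →L[ℝ] ℝ) βhat)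
    (hstat_i : HasFDerivAt
      (fun β => (∑ k ∈ Finset.univ.erase i, ℓ (y k) (dotp (x k) β)) + lam * r β)
      (0 : (Fin p → ℝ) →L[ℝ] ℝ) βloo)
    (hstat_ij : HasFDerivAt
      (fun β => (∑ k ∈ (Finset.univ.erase i).erase j, ℓ (y k) (dotp (x k) β)) + lam * r β)
      (0 : (Fin p → ℝ) →L[ℝ] ℝ) βloo2) :
    (0 < (⨅ t : Set.Icc (0:ℝ) 1,
        minEig (jacb x y ddℓ lam hessr (Finset.univ.erase i)
          (t.1 • βhat + (1 - t.1) • βloo))) →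
      (∑ k, (βloo k - βhat k) ^ 2)
        ≤ (dℓ (y i) (dotp (x i) βhat)
            / (⨅ t : Set.Icc (0:ℝ) 1,
                minEig (jacb x y ddℓ lam hessr (Finset.univ.erase i)
                  (t.1 • βhat + (1 - t.1) • βloo)))) ^ 2 * ∑ k, (x i k) ^ 2)
    ∧
    (0 < (⨅ t : Set.Icc (0:ℝ) 1,
        minEig (jacb x y ddℓ lam hessr ((Finset.univ.erase i).erase j)
          (t.1 • βloo + (1 - t.1) • βloo2))) →
      (∑ k, (βloo k - βloo2 k) ^ 2)
        ≤ (dℓ (y j) (dotp (x j) βloo)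
            / (⨅ t : Set.Icc (0:ℝ) 1,
                minEig (jacb x y ddℓ lam hessr ((Finset.univ.erase i).erase j)
                  (t.1 • βloo + (1 - t.1) • βloo2)))) ^ 2 * ∑ k, (x j k) ^ 2) :=
  leave_one_out_perturbation_bound_general y x ℓ dℓ ddℓ hdℓ hddℓ r gradr hessr hgradr hhessr lam i j
    hij βhat βloo βloo2 hstat hstat_i hstat_ij
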